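/- arXiv:1407.0331 — 6 statements merged into one kernel-verified Lean document; each statement's English description precedes it below -/
import Mathlib

section
/- If A = (a_ij) is a 3×3 positive semi-definite complex matrix, then the matrix (|a_ij|) obtained by taking the absolute value (modulus) of each entry is also positive semi-definite. -/
/-!
Fix a real vector `x`. Among `x₀, x₁, x₂` two have the same sign, say those with index `≠ k`.
Conjugating `A` by a unitary diagonal matrix keeps it positive semidefinite, does not change the
moduli of its entries, and can be chosen to make row `k` (hence, by hermiticity, column `k`)
nonnegative. Then every term of `∑ xᵢ xⱼ |aᵢⱼ|` dominates the real part of the corresponding term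
of the nonnegative form `∑ xᵢ xⱼ aᵢⱼ`: on row and column `k` the two agree, elsewhere
`xᵢ xⱼ ≥ 0` and `re aᵢⱼ ≤ |aᵢⱼ|`.
-/

open ComplexOrder

namespace Matrix

variable {n 𝕜 : Type*} [RCLike 𝕜]

lemma IsHermitian.of_norm {A : Matrix n n 𝕜} (hA : A.IsHermitian) :
    (of fun i j => ‖A i j‖).IsHermitian := by
  ext i j
  simp [← hA.apply i j]

variable [Fintype n]

lemma conjTranspose_diagonal_mul_mul_diagonal_apply [DecidableEq n] (A : Matrix n n 𝕜)
    (ε : n → 𝕜) (i j : n) :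
    ((diagonal ε)ᴴ * A * diagonal ε) i j = star (ε i) * A i j * ε j := by
  simp [diagonal_conjTranspose, mul_diagonal, diagonal_mul]

lemma of_norm_conjTranspose_diagonal_mul_mul_diagonal [DecidableEq n] (A : Matrix n n 𝕜)
    {ε : n → 𝕜} (hε : ∀ i, ‖ε i‖ = 1) :
    (of fun i j => ‖((diagonal ε)ᴴ * A * diagonal ε) i j‖) = of fun i j => ‖A i j‖ := by
  ext i j
  simp only [of_apply, conjTranspose_diagonal_mul_mul_diagonal_apply, norm_mul, norm_star, hε,
    one_mul, mul_one]

lemma PosSemidef.dotProduct_norm_mulVec_nonneg {A : Matrix n n 𝕜} (hA : A.PosSemidef)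
    {x : n → ℝ} (h : ∀ i j, 0 ≤ A i j ∨ 0 ≤ x i * x j) :
    0 ≤ x ⬝ᵥ (of fun i j => ‖A i j‖) *ᵥ x := by
  have hre := (RCLike.nonneg_iff.mp (hA.dotProduct_mulVec_nonneg fun i => (x i : 𝕜))).1
  refine hre.trans ?_
  simp only [dotProduct, mulVec, Finset.mul_sum, map_sum, of_apply]
  refine Finset.sum_le_sum fun i _ => Finset.sum_le_sum fun j _ => ?_
  have hterm : x i * x j * RCLike.re (A i j) ≤ x i * x j * ‖A i j‖ := by
    rcases h i j with hA | hx
    · have := congrArg RCLike.re (RCLike.norm_of_nonneg' hA)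
      rw [RCLike.ofReal_re] at this
      rw [this]
    · exact mul_le_mul_of_nonneg_left (RCLike.re_le_norm _) hx
  simpa [mul_comm, mul_left_comm, mul_assoc] using hterm

lemma PosSemidef.exists_diagonal_conj_row_nonneg [DecidableEq n] {A : Matrix n n ℂ}
    (hA : A.PosSemidef) (k : n) :
    ∃ ε : n → ℂ, (∀ i, ‖ε i‖ = 1) ∧ ∀ j, 0 ≤ ((diagonal ε)ᴴ * A * diagonal ε) k j := by
  set ε : n → ℂ := fun j => Complex.exp (↑(-(A k j).arg) * Complex.I)
  have hnorm : ∀ j, ‖ε j‖ = 1 := fun j => Complex.norm_exp_ofReal_mul_I _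
  have hphase : ∀ j, A k j * ε j = ‖A k j‖ := fun j => by
    conv_lhs => rw [← Complex.norm_mul_exp_arg_mul_I (A k j)]
    rw [mul_assoc, ← Complex.exp_add]
    simp
  have hkk : star (ε k) = 1 := by
    simp [ε, Complex.arg_eq_zero_iff_zero_le.mpr hA.diag_nonneg]
  refine ⟨ε, hnorm, fun j => ?_⟩
  rw [conjTranspose_diagonal_mul_mul_diagonal_apply, hkk, one_mul, hphase]
  exact Complex.zero_le_real.mpr (norm_nonneg _)

end Matrix

lemma exists_forall_ne_mul_nonneg (x : Fin 3 → ℝ) :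
    ∃ k : Fin 3, ∀ i j, i ≠ k → j ≠ k → 0 ≤ x i * x j := by
  -- the product of the three pairwise products is the square `(x₀ x₁ x₂)²`
  have : 0 ≤ x 1 * x 2 ∨ 0 ≤ x 0 * x 2 ∨ 0 ≤ x 0 * x 1 := by
    by_contra! h
    nlinarith [mul_pos_of_neg_of_neg h.1 h.2.1, sq_nonneg (x 0)]
  rcases this with h | h | h <;> [use 0; use 1; use 2] <;> intro i j hi hj <;>
    fin_cases i <;> fin_cases j <;> simp_all [mul_self_nonneg] <;>
    linarith [mul_comm (x 0) (x 1), mul_comm (x 0) (x 2), mul_comm (x 1) (x 2)]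

open Matrix in
theorem abs_entrywise_posSemidef_three (A : Matrix (Fin 3) (Fin 3) ℂ)
    (hA : A.PosSemidef) :
    (Matrix.of fun i j => (‖A i j‖ : ℝ)).PosSemidef := by
  refine .of_dotProduct_mulVec_nonneg hA.isHermitian.of_norm fun x => ?_
  obtain ⟨k, hx⟩ := exists_forall_ne_mul_nonneg x
  obtain ⟨ε, hε, hrow⟩ := hA.exists_diagonal_conj_row_nonneg k
  have hB := hA.conjTranspose_mul_mul_same (diagonal ε)
  rw [star_trivial, ← of_norm_conjTranspose_diagonal_mul_mul_diagonal A hε]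
  refine hB.dotProduct_norm_mulVec_nonneg fun i j => ?_
  by_cases hi : i = k
  · exact .inl (hi ▸ hrow j)
  by_cases hj : j = k
  · rw [hj, ← hB.isHermitian.apply]
    exact .inl (star_nonneg_iff.mpr (hrow i))
  exact .inr (hx i j hi hj)
end

section
/- There exists a 4×4 positive semi-definite complex matrix B = (b_ij) such that the matrix (|b_ij|) of entrywise absolute values is not positive semi-definite. -/
/-!
Take `B = √2 • 1 + C`, where `C` is the adjacency matrix of the 4-cycle with one edge given
the sign `-1`. Then `C` is Hermitian with `C² = 2`, so `B² = 2√2 • B` and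
`B = (2√2)⁻¹ • Bᴴ B` is positive semidefinite. Taking absolute values removes the sign:
`|B| = √2 • 1 + A` with `A` the adjacency matrix of the 4-cycle, which has the alternating
vector as an eigenvector for the eigenvalue `-2`. Hence `|B|` has the negative eigenvalue
`√2 - 2`.
-/

open ComplexOrder Matrix

namespace Matrix

variable {n R 𝕜 : Type*} [Fintype n]

theorem not_posSemidef_of_mulVec_eq_smul_of_neg [CommRing R] [PartialOrder R]
    [IsStrictOrderedRing R] [NoZeroDivisors R] [StarRing R] [StarOrderedRing R]
    {A : Matrix n n R} {x : n → R} (hx : x ≠ 0) {μ : R} (hμ : μ < 0)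
    (h : A *ᵥ x = μ • x) : ¬A.PosSemidef := fun hA => by
  have hquad := hA.dotProduct_mulVec_nonneg x
  rw [h, dotProduct_smul, smul_eq_mul] at hquad
  exact (mul_neg_of_neg_of_pos hμ (dotProduct_star_self_pos_iff.mpr hx)).not_ge hquad

variable [RCLike 𝕜]

theorem posSemidef_of_isHermitian_of_mul_self_eq_smul {A : Matrix n n 𝕜} (hA : A.IsHermitian)
    {c : ℝ} (hc : 0 < c) (h : A * A = c • A) : A.PosSemidef := by
  have hgram : A = c⁻¹ • (Aᴴ * A) := by
    rw [hA.eq, h, smul_smul, inv_mul_cancel₀ hc.ne', one_smul]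
  rw [hgram]
  exact (posSemidef_conjTranspose_mul_self A).smul (inv_nonneg.mpr hc.le)

theorem posSemidef_smul_one_add_of_mul_self_eq [DecidableEq n] {C : Matrix n n 𝕜}
    (hC : C.IsHermitian) {c : ℝ} (hc : 0 < c) (h : C * C = (c ^ 2) • 1) :
    (c • 1 + C).PosSemidef := by
  refine posSemidef_of_isHermitian_of_mul_self_eq_smul ?_ (by positivity : 0 < 2 * c) ?_
  · exact (isHermitian_one.smul (IsSelfAdjoint.all c)).add hC
  · simp only [add_mul, mul_add, smul_mul_assoc, mul_smul_comm, one_mul, mul_one, h, smul_add,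
      smul_smul]
    module

end Matrix

def signedCycle : Matrix (Fin 4) (Fin 4) ℂ :=
  !![0, 1, 0, -1; 1, 0, 1, 0; 0, 1, 0, 1; -1, 0, 1, 0]

def cycleAdj : Matrix (Fin 4) (Fin 4) ℝ :=
  !![0, 1, 0, 1; 1, 0, 1, 0; 0, 1, 0, 1; 1, 0, 1, 0]

lemma signedCycle_isHermitian : signedCycle.IsHermitian := by
  ext i j
  fin_cases i <;> fin_cases j <;> simp [signedCycle]

lemma signedCycle_mul_self : signedCycle * signedCycle = (√2 ^ 2) • 1 := by
  rw [Real.sq_sqrt zero_le_two]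
  ext i j
  fin_cases i <;> fin_cases j <;> simp [signedCycle, mul_apply, Fin.sum_univ_four] <;> norm_num

lemma norm_smul_one_add_signedCycle :
    (of fun i j => ‖(√2 • 1 + signedCycle) i j‖) = √2 • 1 + cycleAdj := by
  ext i j
  fin_cases i <;> fin_cases j <;> simp [signedCycle, cycleAdj]

lemma cycleAdj_mulVec_alternating :
    cycleAdj *ᵥ ![1, -1, 1, -1] = (-2 : ℝ) • ![1, -1, 1, -1] := by
  ext i
  fin_cases i <;> simp [cycleAdj, mulVec, dotProduct, Fin.sum_univ_four] <;> norm_num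

theorem exists_posSemidef_four_abs_not_posSemidef :
    ∃ B : Matrix (Fin 4) (Fin 4) ℂ, B.PosSemidef ∧
      ¬ (Matrix.of fun i j => (‖B i j‖ : ℝ)).PosSemidef := by
  refine ⟨√2 • 1 + signedCycle, posSemidef_smul_one_add_of_mul_self_eq signedCycle_isHermitian
    (by positivity) signedCycle_mul_self, ?_⟩
  rw [norm_smul_one_add_signedCycle]
  have hneg : √2 - 2 < 0 := by
    nlinarith [Real.sq_sqrt (zero_le_two : (0 : ℝ) ≤ 2), Real.sqrt_nonneg 2]
  refine not_posSemidef_of_mulVec_eq_smul_of_neg (x := ![1, -1, 1, -1]) (by simp) hneg ?_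
  rw [add_mulVec, smul_mulVec, one_mulVec, cycleAdj_mulVec_alternating, ← add_smul,
    sub_eq_add_neg]
end

section
/- Let A = (A_ij)_{1≤i,j≤3} be a positive semi-definite matrix partitioned into nine n×n blocks. Then the 3×3 real matrix whose (i,j) entry is the trace norm tr|A_ij| (the sum of singular values of A_ij) is positive semi-definite. -/
open ComplexOrder

/-- The trace norm of a rectangular complex matrix: `tr ((Xᴴ X)^{1/2})`,
which equals the sum of the singular values of `X`. -/
noncomputable def traceNorm {m n : ℕ} (X : Matrix (Fin m) (Fin n) ℂ) : ℝ :=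
  (((Matrix.posSemidef_conjTranspose_mul_self X).1.eigenvectorUnitary.1 *
      Matrix.diagonal (((↑) : ℝ → ℂ) ∘ (√·) ∘ (Matrix.posSemidef_conjTranspose_mul_self X).1.eigenvalues) *
      (star (Matrix.posSemidef_conjTranspose_mul_self X).1.eigenvectorUnitary :
        Matrix (Fin n) (Fin n) ℂ)).trace).re

/-!
Write `A = Bᴴ B`. The blocks are then `A_ij = X_iᴴ X_j` for the column blocks `X_i` of `B`, so for
all matrices `C_i` and real `v_i` the sum `∑ v_i v_j Re tr (C_iᴴ A_ij C_j)` is the squared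
Frobenius norm of `∑ v_i X_i C_i`, hence nonnegative. By von Neumann's inequality
`Re tr (U X) ≤ ‖X‖_tr` for unitary `U`, with equality for a suitable `U`. Given `v ∈ ℝ³`, there is
an index `k` with `v_i v_j ≥ 0` whenever `i, j ≠ k`. Take `C_k = 1` and,
when `v_i v_k < 0`, let `C_i` be a unitary attaining `‖A_ki‖_tr`. Then every term with
`v_i v_j < 0` equals `v_i v_j ‖A_ij‖_tr` and every other term is at most that, so
`∑ v_i v_j ‖A_ij‖_tr ≥ 0`.
-/

open Matrix WithLp
open scoped InnerProductSpace MatrixOrder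

namespace Matrix

section Columns

variable {m ι : Type*} [Fintype m]

lemma inner_toLp_col (M N : Matrix m ι ℂ) (i j : ι) :
    ⟪toLp 2 (M.col i), toLp 2 (N.col j)⟫_ℂ = (Mᴴ * N) i j := by
  simp [PiLp.inner_apply, mul_apply, mul_comm]

lemma norm_toLp_col_eq_sqrt (M : Matrix m ι ℂ) (i : ι) :
    ‖toLp 2 (M.col i)‖ = √((Mᴴ * M) i i).re := by
  rw [norm_eq_sqrt_re_inner (𝕜 := ℂ), inner_toLp_col]
  rfl

variable [Fintype ι]

lemma trace_conjTranspose_mul_eq_sum_inner (M N : Matrix m ι ℂ) :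
    (Mᴴ * N).trace = ∑ i, ⟪toLp 2 (M.col i), toLp 2 (N.col i)⟫_ℂ := by
  simp [trace, inner_toLp_col]

lemma re_trace_conjTranspose (M : Matrix ι ι ℂ) : Mᴴ.trace.re = M.trace.re := by
  rw [trace_conjTranspose, Complex.star_def, Complex.conj_re]

variable [DecidableEq ι]

lemma conjTranspose_mem_unitaryGroup {U : Matrix ι ι ℂ} (hU : U ∈ unitaryGroup ι ℂ) :
    Uᴴ ∈ unitaryGroup ι ℂ :=
  Unitary.star_mem hU

lemma trace_mul_eq_trace_conjTranspose_mul {W : Matrix ι ι ℂ} (hW : W ∈ unitaryGroup ι ℂ)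
    (U X : Matrix ι ι ℂ) : (U * X).trace = ((Uᴴ * W)ᴴ * (X * W)).trace := by
  rw [conjTranspose_mul, conjTranspose_conjTranspose, Matrix.mul_assoc, trace_mul_comm Wᴴ,
    Matrix.mul_assoc, Matrix.mul_assoc, ← star_eq_conjTranspose, mem_unitaryGroup_iff.mp hW,
    Matrix.mul_one]

lemma norm_toLp_col_of_mem_unitaryGroup {U : Matrix ι ι ℂ} (hU : U ∈ unitaryGroup ι ℂ) (i : ι) :
    ‖toLp 2 (U.col i)‖ = 1 := by
  rw [norm_toLp_col_eq_sqrt, ← star_eq_conjTranspose, mem_unitaryGroup_iff'.mp hU]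
  simp

lemma re_trace_conjTranspose_mul_le {U : Matrix ι ι ℂ} (hU : U ∈ unitaryGroup ι ℂ)
    (Y : Matrix ι ι ℂ) : (Uᴴ * Y).trace.re ≤ ∑ i, ‖toLp 2 (Y.col i)‖ := by
  rw [trace_conjTranspose_mul_eq_sum_inner, Complex.re_sum]
  gcongr with i
  calc _ ≤ ‖⟪toLp 2 (U.col i), toLp 2 (Y.col i)⟫_ℂ‖ := Complex.re_le_norm _
    _ ≤ ‖toLp 2 (U.col i)‖ * ‖toLp 2 (Y.col i)‖ := norm_inner_le_norm _ _
    _ = ‖toLp 2 (Y.col i)‖ := by rw [norm_toLp_col_of_mem_unitaryGroup hU, one_mul]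

lemma exists_mem_unitaryGroup_re_trace_conjTranspose_mul_eq {Y : Matrix ι ι ℂ}
    (hY : (Yᴴ * Y).IsDiag) :
    ∃ V ∈ unitaryGroup ι ℂ, (Vᴴ * Y).trace.re = ∑ i, ‖toLp 2 (Y.col i)‖ := by
  set y : ι → EuclideanSpace ℂ ι := fun i => toLp 2 (Y.col i)
  set s : Set ι := {i | y i ≠ 0}
  -- the columns of `V` extend the normalized nonzero columns of `Y` to an orthonormal basis
  have hortho : Orthonormal ℂ (s.domRestrict fun i => (‖y i‖⁻¹ : ℂ) • y i) := by
    refine ⟨fun i => norm_smul_inv_norm i.2, fun i j hij => ?_⟩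
    simp only [Set.domRestrict_apply, inner_smul_left, inner_smul_right, y, inner_toLp_col,
      hY (Subtype.coe_ne_coe.mpr hij), mul_zero]
  obtain ⟨b, hb⟩ := hortho.exists_orthonormalBasis_extension_of_card_eq (by simp)
  refine ⟨(EuclideanSpace.basisFun ι ℂ).toBasis.toMatrix b.toBasis,
    (EuclideanSpace.basisFun ι ℂ).toMatrix_orthonormalBasis_mem_unitary b, ?_⟩
  rw [trace_conjTranspose_mul_eq_sum_inner, Complex.re_sum]
  refine Finset.sum_congr rfl fun i _ => ?_
  change (⟪b i, y i⟫_ℂ).re = ‖y i‖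
  by_cases hi : y i = 0
  · simp [hi]
  · have hnorm : (‖y i‖ : ℂ)⁻¹ * (‖y i‖ : ℂ) ^ 2 = ‖y i‖ := by
      field_simp [norm_ne_zero_iff.mpr hi]
    rw [hb i hi, inner_smul_left, inner_self_eq_norm_sq_to_K, map_inv₀, Complex.conj_ofReal]
    exact congrArg Complex.re hnorm

end Columns

lemma PosSemidef.sum_mul_re_trace_blocks_nonneg {ι κ : Type*} [Fintype ι] [Fintype κ]
    {A : Matrix (ι × κ) (ι × κ) ℂ} (hA : A.PosSemidef) (C : ι → Matrix κ κ ℂ) (v : ι → ℝ) :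
    0 ≤ ∑ i, ∑ j,
      v i * v j * ((C i)ᴴ * A.submatrix (Prod.mk i) (Prod.mk j) * C j).trace.re := by
  classical
  obtain ⟨B, rfl⟩ := CStarAlgebra.nonneg_iff_eq_star_mul_self.mp hA.nonneg
  have hblock (i j : ι) : (star B * B).submatrix (Prod.mk i) (Prod.mk j) =
      (B.submatrix id (Prod.mk i))ᴴ * B.submatrix id (Prod.mk j) := by
    rw [submatrix_mul _ _ _ id _ Function.bijective_id, star_eq_conjTranspose,
      conjTranspose_submatrix]
  set Z := ∑ i, (v i : ℂ) • (B.submatrix id (Prod.mk i) * C i)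
  have hZ : (Zᴴ * Z).trace = ∑ i, ∑ j, ((v i * v j : ℝ) : ℂ) *
      ((C i)ᴴ * (star B * B).submatrix (Prod.mk i) (Prod.mk j) * C j).trace := by
    simp only [Z, conjTranspose_sum, Matrix.sum_mul, Matrix.mul_sum, trace_sum, conjTranspose_smul,
      smul_mul, Matrix.mul_smul, trace_smul, hblock, conjTranspose_mul, Matrix.mul_assoc,
      smul_eq_mul, Complex.star_def, Complex.conj_ofReal, Complex.ofReal_mul, mul_assoc]
    rw [Finset.sum_comm]
    simp only [mul_left_comm, Finset.mul_sum]
  have hnonneg := (posSemidef_conjTranspose_mul_self Z).trace_nonneg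
  rw [hZ] at hnonneg
  simpa only [Complex.re_sum, Complex.re_ofReal_mul] using (Complex.nonneg_iff.mp hnonneg).1

end Matrix

section TraceNorm

variable {m n : ℕ}

noncomputable abbrev rightSingularUnitary (X : Matrix (Fin m) (Fin n) ℂ) :
    Matrix (Fin n) (Fin n) ℂ :=
  (posSemidef_conjTranspose_mul_self X).1.eigenvectorUnitary

lemma rightSingularUnitary_mem_unitaryGroup (X : Matrix (Fin m) (Fin n) ℂ) :
    rightSingularUnitary X ∈ unitaryGroup (Fin n) ℂ :=
  Subtype.prop _

lemma conjTranspose_mul_self_mul_rightSingularUnitary (X : Matrix (Fin m) (Fin n) ℂ) :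
    (X * rightSingularUnitary X)ᴴ * (X * rightSingularUnitary X) =
      diagonal (((↑) : ℝ → ℂ) ∘ (posSemidef_conjTranspose_mul_self X).1.eigenvalues) :=
  calc _ = star (rightSingularUnitary X) * (Xᴴ * X) * rightSingularUnitary X := by
        simp only [conjTranspose_mul, star_eq_conjTranspose, Matrix.mul_assoc]
    _ = _ := (Unitary.conjStarAlgAut_star_apply (S := ℂ) _ _).symm.trans
      (posSemidef_conjTranspose_mul_self X).1.conjStarAlgAut_star_eigenvectorUnitary

lemma traceNorm_eq_sum_norm_col (X : Matrix (Fin m) (Fin n) ℂ) :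
    traceNorm X = ∑ i, ‖toLp 2 ((X * rightSingularUnitary X).col i)‖ := by
  simp_rw [norm_toLp_col_eq_sqrt, conjTranspose_mul_self_mul_rightSingularUnitary]
  rw [traceNorm, trace_mul_cycle, Unitary.coe_star_mul_self, Matrix.one_mul, trace_diagonal,
    Complex.re_sum]
  simp

lemma re_trace_mul_le_traceNorm {U : Matrix (Fin n) (Fin n) ℂ} (hU : U ∈ unitaryGroup (Fin n) ℂ)
    (X : Matrix (Fin n) (Fin n) ℂ) : (U * X).trace.re ≤ traceNorm X := by
  rw [trace_mul_eq_trace_conjTranspose_mul (rightSingularUnitary_mem_unitaryGroup X),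
    traceNorm_eq_sum_norm_col]
  exact re_trace_conjTranspose_mul_le
    (mul_mem (conjTranspose_mem_unitaryGroup hU) (rightSingularUnitary_mem_unitaryGroup X)) _

lemma exists_mem_unitaryGroup_re_trace_mul_eq_traceNorm (X : Matrix (Fin n) (Fin n) ℂ) :
    ∃ U ∈ unitaryGroup (Fin n) ℂ, (U * X).trace.re = traceNorm X := by
  set W := rightSingularUnitary X
  have hW : W ∈ unitaryGroup (Fin n) ℂ := rightSingularUnitary_mem_unitaryGroup X
  have hdiag : ((X * W)ᴴ * (X * W)).IsDiag := by
    rw [conjTranspose_mul_self_mul_rightSingularUnitary]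
    exact isDiag_diagonal _
  obtain ⟨V, hV, hVtr⟩ := exists_mem_unitaryGroup_re_trace_conjTranspose_mul_eq hdiag
  refine ⟨W * star V, mul_mem hW (Unitary.star_mem hV), ?_⟩
  have hVW : (W * star V)ᴴ * W = V := by
    rw [← star_eq_conjTranspose, star_mul, star_star, Matrix.mul_assoc,
      mem_unitaryGroup_iff'.mp hW, Matrix.mul_one]
  rw [trace_mul_eq_trace_conjTranspose_mul hW, hVW, hVtr, traceNorm_eq_sum_norm_col]

lemma re_trace_conjTranspose_mul_mul_le_traceNorm {U V : Matrix (Fin n) (Fin n) ℂ}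
    (hU : U ∈ unitaryGroup (Fin n) ℂ) (hV : V ∈ unitaryGroup (Fin n) ℂ)
    (X : Matrix (Fin n) (Fin n) ℂ) : (Uᴴ * X * V).trace.re ≤ traceNorm X := by
  rw [trace_mul_comm, ← Matrix.mul_assoc]
  exact re_trace_mul_le_traceNorm (mul_mem hV (conjTranspose_mem_unitaryGroup hU)) X

lemma traceNorm_conjTranspose (X : Matrix (Fin n) (Fin n) ℂ) : traceNorm Xᴴ = traceNorm X := by
  suffices h : ∀ Y : Matrix (Fin n) (Fin n) ℂ, traceNorm Y ≤ traceNorm Yᴴ by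
    exact le_antisymm (by simpa only [conjTranspose_conjTranspose] using h Xᴴ) (h X)
  intro Y
  obtain ⟨U, hU, hUY⟩ := exists_mem_unitaryGroup_re_trace_mul_eq_traceNorm Y
  calc traceNorm Y = (U * Y)ᴴ.trace.re := by rw [re_trace_conjTranspose, hUY]
    _ = (Uᴴ * Yᴴ).trace.re := by rw [conjTranspose_mul, trace_mul_comm]
    _ ≤ traceNorm Yᴴ := re_trace_mul_le_traceNorm (conjTranspose_mem_unitaryGroup hU) _

end TraceNorm

section TraceNormBlocks

variable {ι : Type*} {n : ℕ} {A : Matrix (ι × Fin n) (ι × Fin n) ℂ}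

lemma Matrix.IsHermitian.traceNorm_submatrix_prodMk_comm (hA : A.IsHermitian) (i j : ι) :
    traceNorm (A.submatrix (Prod.mk i) (Prod.mk j)) =
      traceNorm (A.submatrix (Prod.mk j) (Prod.mk i)) := by
  rw [← traceNorm_conjTranspose, conjTranspose_submatrix, hA.eq]

variable [Fintype ι]

lemma Matrix.PosSemidef.sum_mul_traceNorm_blocks_nonneg (hA : A.PosSemidef) {v : ι → ℝ} (k : ι)
    (hk : ∀ i j, i ≠ k → j ≠ k → 0 ≤ v i * v j) :
    0 ≤ ∑ i, ∑ j, v i * v j * traceNorm (A.submatrix (Prod.mk i) (Prod.mk j)) := by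
  classical
  choose U hU hUtr using fun i =>
    exists_mem_unitaryGroup_re_trace_mul_eq_traceNorm (A.submatrix (Prod.mk k) (Prod.mk i))
  set C : ι → Matrix (Fin n) (Fin n) ℂ := fun i => if v i * v k < 0 then U i else 1
  have hC (i : ι) : C i ∈ unitaryGroup (Fin n) ℂ := by
    simp only [C]
    split_ifs
    exacts [hU i, one_mem _]
  have hCk : C k = 1 := if_neg (not_lt.mpr (mul_self_nonneg _))
  refine (hA.sum_mul_re_trace_blocks_nonneg C v).trans
    (Finset.sum_le_sum fun i _ => Finset.sum_le_sum fun j _ => ?_)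
  rcases le_or_gt 0 (v i * v j) with hij | hij
  · exact mul_le_mul_of_nonneg_left
      (re_trace_conjTranspose_mul_mul_le_traceNorm (hC i) (hC j) _) hij
  refine le_of_eq (congrArg _ ?_)
  by_cases hik : i = k
  · subst hik
    have hCj : C j = U j := if_pos (by linarith [mul_comm (v i) (v j)])
    rw [hCk, hCj, conjTranspose_one, Matrix.one_mul, trace_mul_comm, hUtr]
  · obtain rfl : j = k := by_contra fun hjk => (hk i j hik hjk).not_gt hij
    have hCi : C i = U i := if_pos hij
    rw [hCk, hCi, Matrix.mul_one, ← re_trace_conjTranspose, conjTranspose_mul,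
      conjTranspose_conjTranspose, conjTranspose_submatrix, hA.1.eq, trace_mul_comm, hUtr,
      hA.1.traceNorm_submatrix_prodMk_comm]

end TraceNormBlocks

lemma exists_forall_ne_mul_nonneg_of_fin_three (v : Fin 3 → ℝ) :
    ∃ k, ∀ i j, i ≠ k → j ≠ k → 0 ≤ v i * v j := by
  have hsq (i : Fin 3) : 0 ≤ v i * v i := mul_self_nonneg _
  by_cases h01 : 0 ≤ v 0 * v 1
  · refine ⟨2, fun i j hi hj => ?_⟩
    fin_cases i <;> fin_cases j <;> simp_all [mul_comm (v 1) (v 0)]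
  by_cases h02 : 0 ≤ v 0 * v 2
  · refine ⟨1, fun i j hi hj => ?_⟩
    fin_cases i <;> fin_cases j <;> simp_all [mul_comm (v 2) (v 0)]
  have h12 : 0 ≤ v 1 * v 2 := by
    nlinarith [mul_pos_of_neg_of_neg (not_le.mp h01) (not_le.mp h02), hsq 0]
  refine ⟨0, fun i j hi hj => ?_⟩
  fin_cases i <;> fin_cases j <;> simp_all [mul_comm (v 2) (v 1)]

theorem trace_norm_blocks_posSemidef {n : ℕ}
    (A : Matrix (Fin 3 × Fin n) (Fin 3 × Fin n) ℂ) (hA : A.PosSemidef) :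
    (Matrix.of fun i j : Fin 3 =>
      traceNorm (Matrix.of fun r s : Fin n => A (i, r) (j, s))).PosSemidef := by
  change (Matrix.of fun i j : Fin 3 =>
    traceNorm (A.submatrix (Prod.mk i) (Prod.mk j))).PosSemidef
  refine posSemidef_iff_dotProduct_mulVec.mpr ⟨?_, fun v => ?_⟩
  · ext i j
    exact hA.1.traceNorm_submatrix_prodMk_comm j i
  · obtain ⟨k, hk⟩ := exists_forall_ne_mul_nonneg_of_fin_three v
    refine (hA.sum_mul_traceNorm_blocks_nonneg k hk).trans_eq ?_
    simp only [dotProduct, mulVec, of_apply, Finset.mul_sum, Pi.star_apply, star_trivial]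
    exact Finset.sum_congr rfl fun i _ => Finset.sum_congr rfl fun j _ => by ring
end

section
/- Let ||·|| be a unitarily invariant norm on n×n matrices with ||E_11|| = 1 and ||E_11 + ... + E_kk|| = k. Then for every n×n matrix B, the sum of the k largest singular values of B is at most ||B||. -/
open Matrix ComplexOrder

/-- The (unordered) singular values of a square complex matrix, as the square
roots of the eigenvalues of `Bᴴ B`. -/
noncomputable def svals {n : ℕ} (B : Matrix (Fin n) (Fin n) ℂ) : Fin n → ℝ :=
  fun i => Real.sqrt ((Matrix.posSemidef_conjTranspose_mul_self B).1.eigenvalues i)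

/-- The partial identity `E₁₁ + ⋯ + E_kk` in `M_n(ℂ)`. -/
def partialId (n k : ℕ) : Matrix (Fin n) (Fin n) ℂ :=
  Matrix.of fun i j => if i = j ∧ (i : ℕ) < k then 1 else 0

/-!
By the singular value decomposition and invariance under permutation matrices,
`N B = N (diagonal s)`. Killing the diagonal entries outside a set `S` is the average of
`diagonal s` and its conjugate by a diagonal sign matrix, so it does not increase `N`; averaging the
result over the cyclic shifts of `S` gives `(∑ i ∈ S, s i) / #S` times the diagonal projection
onto `S`. For `S = {i | i < k}` that projection is `E₁₁ + ⋯ + E_kk`, of norm `k ≥ #S`.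
-/

namespace Matrix

variable {ι 𝕜 : Type*} [Fintype ι] [DecidableEq ι] [RCLike 𝕜]

theorem exists_unitary_mul_diagonal_of_conjTranspose_mul_self_eq {C : Matrix ι ι 𝕜} {σ : ι → ℝ}
    (hC : Cᴴ * C = diagonal (fun i => (σ i : 𝕜) ^ 2)) :
    ∃ U ∈ unitaryGroup ι 𝕜, C = U * diagonal (fun i => (σ i : 𝕜)) := by
  let c : ι → EuclideanSpace 𝕜 ι := fun i => WithLp.toLp 2 (fun j => C j i)
  have hc : ∀ i j, inner 𝕜 (c i) (c j) = if i = j then (σ i : 𝕜) ^ 2 else 0 := by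
    intro i j
    have : inner 𝕜 (c i) (c j) = (Cᴴ * C) i j := by
      simp [c, EuclideanSpace.inner_eq_star_dotProduct, mul_apply, dotProduct, mul_comm]
    rw [this, hC, diagonal_apply]
  have hv : Orthonormal 𝕜 ({i | σ i ≠ 0}.domRestrict fun i => (σ i : 𝕜)⁻¹ • c i) := by
    rw [orthonormal_iff_ite]
    rintro ⟨i, hi⟩ ⟨j, hj⟩
    simp only [Set.domRestrict, inner_smul_left, inner_smul_right, hc, Subtype.mk.injEq]
    split_ifs with h
    · subst h
      have : (σ i : 𝕜) ≠ 0 := RCLike.ofReal_ne_zero.mpr hi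
      simp only [RCLike.conj_ofReal, map_inv₀]
      field_simp
    · simp
  obtain ⟨b, hb⟩ := hv.exists_orthonormalBasis_extension_of_card_eq (by simp)
  refine ⟨_, (EuclideanSpace.basisFun ι 𝕜).toMatrix_orthonormalBasis_mem_unitary b, ?_⟩
  ext j i
  rw [mul_diagonal, Module.Basis.toMatrix_apply]
  simp only [OrthonormalBasis.coe_toBasis_repr_apply, EuclideanSpace.basisFun_repr]
  by_cases hi : σ i = 0
  · have : c i = 0 := by rw [← inner_self_eq_zero (𝕜 := 𝕜), hc]; simp [hi]
    simpa [hi, c] using congr($this j)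
  · have : (σ i : 𝕜) ≠ 0 := RCLike.ofReal_ne_zero.mpr hi
    simp only [hb i hi, PiLp.smul_apply, smul_eq_mul, c]
    field_simp

end Matrix

theorem exists_unitary_mul_diagonal_svals_mul_unitary {n : ℕ} (B : Matrix (Fin n) (Fin n) ℂ) :
    ∃ U ∈ unitaryGroup (Fin n) ℂ, ∃ V ∈ unitaryGroup (Fin n) ℂ,
      B = U * diagonal (fun i => (svals B i : ℂ)) * V := by
  have hA := posSemidef_conjTranspose_mul_self B
  set W := hA.1.eigenvectorUnitary
  have hBW : (B * W.1)ᴴ * (B * W.1) = diagonal (fun i => (svals B i : ℂ) ^ 2) := by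
    calc (B * W.1)ᴴ * (B * W.1) = star W.1 * (Bᴴ * B) * W.1 := by
          simp only [conjTranspose_mul, star_eq_conjTranspose, Matrix.mul_assoc]
      _ = diagonal (RCLike.ofReal ∘ hA.1.eigenvalues) := by
          rw [← hA.1.conjStarAlgAut_star_eigenvectorUnitary, Unitary.conjStarAlgAut_star_apply]
      _ = diagonal (fun i => (svals B i : ℂ) ^ 2) := by
          congr with i
          simp [svals, ← Complex.ofReal_pow, Real.sq_sqrt (hA.eigenvalues_nonneg i)]
  obtain ⟨U, hU, hBWU⟩ := exists_unitary_mul_diagonal_of_conjTranspose_mul_self_eq (σ := svals B) hBW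
  refine ⟨U, hU, star W.1, Unitary.star_mem W.2, ?_⟩
  calc B = B * W.1 * star W.1 := by
        rw [Matrix.mul_assoc, Unitary.mul_star_self_of_mem W.2, Matrix.mul_one]
    _ = _ := by rw [hBWU]; rfl

namespace Seminorm

variable {ι 𝕜 : Type*} [Fintype ι] [DecidableEq ι] [RCLike 𝕜]

def IsUnitarilyInvariant (p : Seminorm 𝕜 (Matrix ι ι 𝕜)) : Prop :=
  ∀ U ∈ unitaryGroup ι 𝕜, ∀ V ∈ unitaryGroup ι 𝕜, ∀ A, p (U * A * V) = p A

namespace IsUnitarilyInvariant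

variable {p : Seminorm 𝕜 (Matrix ι ι 𝕜)}

theorem apply_diagonal_comp_perm (hp : p.IsUnitarilyInvariant) (σ : Equiv.Perm ι) (d : ι → 𝕜) :
    p (diagonal (d ∘ σ)) = p (diagonal d) := by
  have hσ : σ.permMatrix 𝕜 ∈ unitaryGroup ι 𝕜 := by
    rw [mem_unitaryGroup_iff, star_eq_conjTranspose, conjTranspose_permMatrix, ← permMatrix_mul,
      inv_mul_cancel, permMatrix_one]
  have hconj : σ.permMatrix 𝕜 * diagonal d * star (σ.permMatrix 𝕜) = diagonal (d ∘ σ) := by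
    rw [star_eq_conjTranspose, conjTranspose_permMatrix, PEquiv.toMatrix_toPEquiv_mul,
      PEquiv.mul_toMatrix_toPEquiv, submatrix_submatrix]
    exact submatrix_diagonal_equiv d σ
  rw [← hconj, hp _ hσ _ (Unitary.star_mem hσ)]

theorem apply_diagonal_ite_mem_le (hp : p.IsUnitarilyInvariant) (S : Finset ι) (d : ι → 𝕜) :
    p (diagonal fun i => if i ∈ S then d i else 0) ≤ p (diagonal d) := by
  let E : Matrix ι ι 𝕜 := diagonal fun i => if i ∈ S then 1 else -1
  have hE : E ∈ unitaryGroup ι 𝕜 := by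
    rw [mem_unitaryGroup_iff, star_eq_conjTranspose, diagonal_conjTranspose, diagonal_mul_diagonal,
      ← diagonal_one]
    congr with i
    by_cases hi : i ∈ S <;> simp [hi]
  have hhalf : (diagonal fun i => if i ∈ S then d i else 0) =
      (2⁻¹ : 𝕜) • (diagonal d + E * diagonal d) := by
    rw [diagonal_mul_diagonal, diagonal_add, ← diagonal_smul]
    congr with i
    simp only [Pi.smul_apply, smul_eq_mul]
    split_ifs <;> ring
  have hEd : p (E * diagonal d) = p (diagonal d) := by
    simpa using hp E hE 1 (one_mem _) (diagonal d)
  calc p (diagonal fun i => if i ∈ S then d i else 0)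
      ≤ 2⁻¹ * (p (diagonal d) + p (E * diagonal d)) := by
        rw [hhalf, map_smul_eq_mul, norm_inv, RCLike.norm_ofNat]
        gcongr
        exact map_add_le_add p _ _
    _ = p (diagonal d) := by rw [hEd]; ring

open Finset in
theorem norm_sum_mul_apply_diagonal_ite_mem_le (hp : p.IsUnitarilyInvariant) (S : Finset ι)
    (d : ι → 𝕜) :
    ‖∑ i ∈ S, d i‖ * p (diagonal fun i => if i ∈ S then 1 else 0) ≤ #S * p (diagonal d) := by
  obtain rfl | hS := S.eq_empty_or_nonempty
  · simp
  have : NeZero #S := ⟨hS.card_pos.ne'⟩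
  let t : ι → 𝕜 := fun i => if i ∈ S then d i else 0
  let e : Fin #S ≃ S := S.equivFin.symm
  let τ : Fin #S → Equiv.Perm ι := fun m => (Equiv.addLeft m).extendDomain e
  have hsum : ∑ m, diagonal (t ∘ τ m) =
      (∑ i ∈ S, d i) • diagonal (fun i => if i ∈ S then 1 else 0) := by
    change ∑ m, diagonalAddMonoidHom ι 𝕜 (t ∘ τ m) = _
    rw [← diagonal_smul, ← map_sum]
    refine congrArg diagonal (funext fun i => ?_)
    simp only [Finset.sum_apply, Function.comp_apply, Pi.smul_apply,
      smul_eq_mul, mul_ite, mul_one, mul_zero]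
    by_cases hi : i ∈ S
    · simp only [τ, Equiv.Perm.extendDomain_apply_subtype _ e hi, hi, if_true]
      calc ∑ m, t (e (m + e.symm ⟨i, hi⟩)) = ∑ m, d (e m) :=
            Fintype.sum_equiv (Equiv.addRight _) _ _ fun m => if_pos (e _).2
        _ = ∑ x : S, d x := Fintype.sum_equiv e _ _ fun _ => rfl
        _ = ∑ i ∈ S, d i := S.sum_coe_sort d
    · simp [τ, t, Equiv.Perm.extendDomain_apply_not_subtype _ e hi, hi]
  calc ‖∑ i ∈ S, d i‖ * p (diagonal fun i => if i ∈ S then 1 else 0)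
      = p (∑ m, diagonal (t ∘ τ m)) := by rw [hsum, map_smul_eq_mul]
    _ ≤ ∑ m, p (diagonal (t ∘ τ m)) :=
        Finset.le_sum_of_subadditive p (map_zero p).le (map_add_le_add p) _ _
    _ = #S * p (diagonal t) := by simp [hp.apply_diagonal_comp_perm]
    _ ≤ #S * p (diagonal d) := by gcongr; exact hp.apply_diagonal_ite_mem_le S d

theorem apply_eq_apply_diagonal_svals {n : ℕ} {p : Seminorm ℂ (Matrix (Fin n) (Fin n) ℂ)}
    (hp : p.IsUnitarilyInvariant) (B : Matrix (Fin n) (Fin n) ℂ) :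
    p B = p (diagonal fun i => (svals B i : ℂ)) := by
  obtain ⟨U, hU, V, hV, hB⟩ := exists_unitary_mul_diagonal_svals_mul_unitary B
  conv_lhs => rw [hB]
  exact hp U hU V hV _

end IsUnitarilyInvariant

end Seminorm

open Finset in
theorem kyFan_le_norm_general {n k : ℕ}
    (N : Matrix (Fin n) (Fin n) ℂ → ℝ)
    (htri : ∀ B C, N (B + C) ≤ N B + N C)
    (hsmul : ∀ (c : ℂ) B, N (c • B) = ‖c‖ * N B)
    (hinv : ∀ U V B, U ∈ Matrix.unitaryGroup (Fin n) ℂ →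
      V ∈ Matrix.unitaryGroup (Fin n) ℂ → N (U * B * V) = N B)
    (hPk : N (partialId n k) = k)
    (B : Matrix (Fin n) (Fin n) ℂ) (s : Fin n → ℝ)
    (hperm : ∃ σ : Equiv.Perm (Fin n), ∀ i, s i = svals B (σ i)) :
    ∑ j ∈ Finset.univ.filter (fun j : Fin n => (j : ℕ) < k), s j ≤ N B := by
  obtain ⟨σ, hσ⟩ := hperm
  let p : Seminorm ℂ (Matrix (Fin n) (Fin n) ℂ) := Seminorm.of N htri hsmul
  have hp : p.IsUnitarilyInvariant := fun U hU V hV A => hinv U V A hU hV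
  set S := univ.filter fun j : Fin n => (j : ℕ) < k
  have hNB : N B = p (diagonal fun i => (s i : ℂ)) := by
    have hs : (fun i => (s i : ℂ)) = (fun i => (svals B i : ℂ)) ∘ σ := funext fun i => by simp [hσ]
    rw [hs, hp.apply_diagonal_comp_perm]
    exact hp.apply_eq_apply_diagonal_svals B
  have hPS : partialId n k = diagonal fun i => if i ∈ S then 1 else 0 := by
    ext i j
    simp [partialId, diagonal_apply, S, ite_and]
  have key : (∑ j ∈ S, s j) * k ≤ #S * N B :=
    calc (∑ j ∈ S, s j) * k
        ≤ ‖∑ j ∈ S, (s j : ℂ)‖ * p (diagonal fun i => if i ∈ S then 1 else 0) := by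
          change _ ≤ _ * N _
          rw [← hPS, hPk, ← Complex.ofReal_sum, Complex.norm_real]
          gcongr
          exact Real.le_norm_self _
      _ ≤ #S * p (diagonal fun i => (s i : ℂ)) := hp.norm_sum_mul_apply_diagonal_ite_mem_le S _
      _ = #S * N B := by rw [hNB]
  obtain rfl | hk := Nat.eq_zero_or_pos k
  · simp only [S, Nat.not_lt_zero, filter_false, sum_empty]
    exact apply_nonneg p B
  have hS : #S ≤ k := by simp [S, Fin.card_filter_val_lt]
  refine le_of_mul_le_mul_right (key.trans ?_) (Nat.cast_pos.mpr hk)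
  rw [mul_comm (N B)]
  gcongr
  exact apply_nonneg p B

/-- If a unitarily invariant norm on `M_n(ℂ)` satisfies `‖E₁₁‖ = 1` and
`‖E₁₁ + ⋯ + E_kk‖ = k`, then it dominates the Ky Fan `k`-norm: for every `B`,
the sum of the `k` largest singular values of `B` is at most `‖B‖`. -/
theorem kyFan_le_norm {n k : ℕ} (hn : 0 < n) (hk : k ≤ n)
    (N : Matrix (Fin n) (Fin n) ℂ → ℝ)
    (hpos : ∀ B, 0 ≤ N B) (hzero : ∀ B, N B = 0 → B = 0)
    (htri : ∀ B C, N (B + C) ≤ N B + N C)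
    (hsmul : ∀ (c : ℂ) B, N (c • B) = ‖c‖ * N B)
    (hinv : ∀ U V B, U ∈ Matrix.unitaryGroup (Fin n) ℂ →
      V ∈ Matrix.unitaryGroup (Fin n) ℂ → N (U * B * V) = N B)
    (hE : N (Matrix.single ⟨0, hn⟩ ⟨0, hn⟩ 1) = 1)
    (hPk : N (partialId n k) = k)
    (B : Matrix (Fin n) (Fin n) ℂ) (s : Fin n → ℝ) (hs : Antitone s)
    (hperm : ∃ σ : Equiv.Perm (Fin n), ∀ i, s i = svals B (σ i)) :
    ∑ j ∈ Finset.univ.filter (fun j : Fin n => (j : ℕ) < k), s j ≤ N B :=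
  kyFan_le_norm_general N htri hsmul hinv hPk B s hperm
end

section
/- Let A = (A_ij)_{1≤i,j≤2} be a positive semi-definite matrix partitioned into n×n blocks, and let ||·|| be any unitarily invariant norm on M_n(C). Then the 2×2 matrix (||A_ij||) is positive semi-definite; equivalently, ||A_12||^2 ≤ ||A_11||·||A_22||. -/
/-!
Write `A₁₂ = U P` with `U` unitary and `P ≥ 0` (polar decomposition). Compressing `A` by the
column `(s U, -1)` gives `2 s P ≤ s² U* A₁₁ U + A₂₂` for every `s ≥ 0`. A unitarily invariant norm
is monotone on positive semidefinite matrices: by Hahn–Banach, `N P = Re tr (H P)` for a Hermitian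
`H` with `Re tr (H X) ≤ N X` for all `X`, and splitting `H = H₊ - H₋` with `H₊ + H₋ = H W`, `W`
unitary, gives `N P ≤ Re tr (H₊ P) ≤ Re tr (H₊ R) ≤ N R` whenever `P ≤ R`. Hence
`2 s N(A₁₂) ≤ s² N(A₁₁) + N(A₂₂)` for all `s ≥ 0`, and the discriminant of this quadratic gives
`N(A₁₂)² ≤ N(A₁₁) N(A₂₂)`. Since `N(A₂₁) = N(A₁₂*) = N(A₁₂)`, this is the positivity of the matrix
of norms.
-/

open Matrix ComplexOrder

/-- The `(i,j)` block of a `2 × 2` partitioned matrix with `n × n` blocks. -/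
def blk {n : ℕ} (A : Matrix (Fin 2 × Fin n) (Fin 2 × Fin n) ℂ) (i j : Fin 2) :
    Matrix (Fin n) (Fin n) ℂ :=
  Matrix.of fun r s => A (i, r) (j, s)

theorem exists_linearMap_eq_and_le_sublinear {E : Type*} [AddCommGroup E] [Module ℝ E]
    {N : E → ℝ} (hsmul : ∀ c : ℝ, 0 < c → ∀ x, N (c • x) = c * N x)
    (hadd : ∀ x y, N (x + y) ≤ N x + N y) (x : E) :
    ∃ g : E →ₗ[ℝ] ℝ, g x = N x ∧ ∀ y, g y ≤ N y := by
  have hzero : N 0 = 0 := by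
    have := hsmul 2 two_pos 0
    rw [smul_zero] at this
    linarith
  have hle (c : ℝ) : c * N x ≤ N (c • x) := by
    rcases lt_trichotomy c 0 with hc | rfl | hc
    · have := hadd (c • x) ((-c) • x)
      rw [← add_smul, add_neg_cancel, zero_smul, hzero, hsmul _ (neg_pos.mpr hc)] at this
      linarith
    · simp [hzero]
    · exact (hsmul c hc x).ge
  let f : E →ₗ.[ℝ] ℝ := LinearPMap.mkSpanSingleton' x (N x) fun (c : ℝ) hc => by
    rcases smul_eq_zero.mp hc with rfl | rfl
    · exact zero_smul _ _
    · rw [hzero, smul_zero]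
  obtain ⟨g, hgf, hgN⟩ := exists_extension_of_le_sublinear f N hsmul hadd <| by
    rintro ⟨z, hz⟩
    obtain ⟨c, rfl⟩ := Submodule.mem_span_singleton.mp hz
    rw [LinearPMap.mkSpanSingleton'_apply]
    exact hle c
  exact ⟨g, (hgf ⟨x, Submodule.mem_span_singleton_self x⟩).trans
    (LinearPMap.mkSpanSingleton'_apply_self _ _ _ _), hgN⟩

theorem ContinuousLinearMap.exists_mem_unitary_mul_eq_of_norm_apply_eq {𝕜 V : Type*} [RCLike 𝕜]
    [NormedAddCommGroup V] [InnerProductSpace 𝕜 V] [FiniteDimensional 𝕜 V] [CompleteSpace V]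
    {b p : V →L[𝕜] V} (h : ∀ x, ‖b x‖ = ‖p x‖) : ∃ u ∈ unitary (V →L[𝕜] V), b = u * p := by
  let p' : V →ₗ[𝕜] V := p
  have hker : LinearMap.ker p' ≤ LinearMap.ker (b : V →ₗ[𝕜] V) := fun x hx => by
    rw [LinearMap.mem_ker, ← norm_eq_zero] at hx ⊢
    exact (h x).trans hx
  let L := (LinearMap.ker p').liftQ _ hker ∘ₗ p'.quotKerEquivRange.symm.toLinearMap
  have hL (x : V) : L ⟨p' x, LinearMap.mem_range_self p' x⟩ = b x := by
    simp [L, LinearMap.quotKerEquivRange_symm_apply_image]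
  let Li : LinearMap.range p' →ₗᵢ[𝕜] V :=
    ⟨L, by rintro ⟨_, x, rfl⟩; exact congr(‖$(hL x)‖).trans (h x)⟩
  let u := Unitary.linearIsometryEquiv.symm (Li.extend.toLinearIsometryEquiv rfl)
  refine ⟨u, u.2, ContinuousLinearMap.ext fun x => ?_⟩
  exact ((Li.extend_apply ⟨p' x, LinearMap.mem_range_self p' x⟩).trans (hL x)).symm

namespace Matrix

variable {n : Type*} [Fintype n] {𝕜 : Type*} [RCLike 𝕜]

theorem PosSemidef.fromBlocks_conj_fromRows {m : Type*} [Fintype m] {A B C : Matrix n n 𝕜}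
    (hM : (fromBlocks A B Bᴴ C).PosSemidef) (X Y : Matrix n m 𝕜) :
    (Xᴴ * A * X + Xᴴ * B * Y + Yᴴ * Bᴴ * X + Yᴴ * C * Y).PosSemidef := by
  have := hM.conjTranspose_mul_mul_same (fromRows X Y)
  rw [conjTranspose_fromRows_eq_fromCols_conjTranspose, fromCols_mul_fromBlocks,
    fromCols_mul_fromRows] at this
  convert this using 1
  simp only [Matrix.add_mul, Matrix.mul_assoc]
  abel

variable [DecidableEq n]

section
open scoped MatrixOrder

theorem PosSemidef.trace_mul_nonneg {A B : Matrix n n 𝕜} (hA : A.PosSemidef)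
    (hB : B.PosSemidef) : 0 ≤ (A * B).trace := by
  obtain ⟨S, rfl⟩ := CStarAlgebra.nonneg_iff_eq_star_mul_self.mp hB.nonneg
  rw [← Matrix.mul_assoc, trace_mul_comm, ← Matrix.mul_assoc, star_eq_conjTranspose]
  exact (hA.mul_mul_conjTranspose_same S).trace_nonneg

theorem IsHermitian.exists_sub_eq_and_mul_unitary_eq_add {H : Matrix n n 𝕜}
    (hH : H.IsHermitian) :
    ∃ H₁ H₂ W : Matrix n n 𝕜, H₁.PosSemidef ∧ H₂.PosSemidef ∧ W ∈ unitaryGroup n 𝕜 ∧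
      H = H₁ - H₂ ∧ H * W = H₁ + H₂ := by
  have hsa : IsSelfAdjoint H := hH
  have hcont (f : ℝ → ℝ) : ContinuousOn f (spectrum ℝ H) := H.finite_real_spectrum.continuousOn f
  set sgn : ℝ → ℝ := fun x => if x < 0 then -1 else 1
  refine ⟨cfc (fun x : ℝ => max x 0) H, cfc (fun x : ℝ => max (-x) 0) H, cfc sgn H,
    (cfc_nonneg fun x _ => le_max_right x 0).posSemidef,
    (cfc_nonneg fun x _ => le_max_right (-x) 0).posSemidef, ?_, ?_, ?_⟩
  · rw [mem_unitaryGroup_iff, ← cfc_star, ← cfc_mul _ _ _ (hcont _) (hcont _), ← cfc_one ℝ H]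
    refine cfc_congr fun x _ => ?_
    simp only [sgn, star_trivial]; split_ifs <;> norm_num
  · rw [← cfc_sub ..]
    conv_lhs => rw [← cfc_id' ℝ H]
    refine cfc_congr fun x _ => ?_
    simp only [max_def]; split_ifs <;> linarith
  · nth_rw 1 [← cfc_id' ℝ H]
    rw [← cfc_mul _ _ _ (hcont _) (hcont _), ← cfc_add ..]
    refine cfc_congr fun x _ => ?_
    simp only [sgn, max_def]; split_ifs <;> linarith

theorem exists_mem_unitaryGroup_mul_eq_of_conjTranspose_mul_self_eq {B P : Matrix n n 𝕜}
    (h : Pᴴ * P = Bᴴ * B) : ∃ U ∈ unitaryGroup n 𝕜, B = U * P := by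
  let φ := toEuclideanCLM (n := n) (𝕜 := 𝕜)
  have hφ : star (φ B) * φ B = star (φ P) * φ P := by
    simpa [← star_eq_conjTranspose, map_star] using congr(φ $h.symm)
  obtain ⟨u, hu, hBu⟩ := ContinuousLinearMap.exists_mem_unitary_mul_eq_of_norm_apply_eq
    (b := φ B) (p := φ P) fun x => by
      rw [← sq_eq_sq₀ (norm_nonneg _) (norm_nonneg _),
        (φ B).apply_norm_sq_eq_inner_adjoint_left, (φ P).apply_norm_sq_eq_inner_adjoint_left]
      exact congr(RCLike.re (inner 𝕜 ($hφ x) x))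
  refine ⟨φ.symm u, Unitary.map_mem φ.symm hu, ?_⟩
  rw [← φ.symm_apply_apply B, ← φ.symm_apply_apply P, ← map_mul, hBu]

theorem exists_mem_unitaryGroup_mul_posSemidef (B : Matrix n n 𝕜) :
    ∃ U ∈ unitaryGroup n 𝕜, ∃ P : Matrix n n 𝕜, P.PosSemidef ∧ B = U * P := by
  have hBB : 0 ≤ Bᴴ * B := (posSemidef_conjTranspose_mul_self B).nonneg
  have hP := CFC.sqrt_nonneg (Bᴴ * B)
  obtain ⟨U, hU, hBU⟩ := exists_mem_unitaryGroup_mul_eq_of_conjTranspose_mul_self_eq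
    (P := CFC.sqrt (Bᴴ * B)) (B := B) <| by
      rw [hP.posSemidef.isHermitian.eq, CFC.sqrt_mul_sqrt_self _ hBB]
  exact ⟨U, hU, _, hP.posSemidef, hBU⟩

end

theorem exists_re_trace_mul_eq (g : Matrix n n ℂ →ₗ[ℝ] ℝ) :
    ∃ Z : Matrix n n ℂ, ∀ X, g X = (Z * X).trace.re := by
  set Z : Matrix n n ℂ := of fun j i => ⟨g (single i j 1), -g (single i j Complex.I)⟩
  have hsingle (X : Matrix n n ℂ) (i j : n) : g (single i j (X i j)) = (Z j i * X i j).re := by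
    have : single i j (X i j) = (X i j).re • single i j 1 + (X i j).im • single i j Complex.I := by
      rw [smul_single, smul_single, ← single_add]
      congr 1
      apply Complex.ext <;> simp
    rw [this, map_add, map_smul, map_smul]
    simp only [smul_eq_mul, of_apply, Complex.mul_re, neg_mul, sub_neg_eq_add, Z]
    ring
  refine ⟨Z, fun X => ?_⟩
  conv_lhs => rw [matrix_eq_sum_single X]
  simp only [map_sum, hsingle, trace, diag, mul_apply, Complex.re_sum]
  exact Finset.sum_comm

def IsUnitarilyInvariant (N : Matrix n n ℂ → ℝ) : Prop :=
  ∀ U V B, U ∈ unitaryGroup n ℂ → V ∈ unitaryGroup n ℂ → N (U * B * V) = N B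

namespace IsUnitarilyInvariant

variable {N : Matrix n n ℂ → ℝ}

theorem apply_mul_left (hN : IsUnitarilyInvariant N) {U : Matrix n n ℂ}
    (hU : U ∈ unitaryGroup n ℂ) (B : Matrix n n ℂ) : N (U * B) = N B := by
  simpa using hN U 1 B hU (one_mem _)

theorem apply_conjTranspose (hN : IsUnitarilyInvariant N) (B : Matrix n n ℂ) : N Bᴴ = N B := by
  obtain ⟨U, hU, P, hP, rfl⟩ := exists_mem_unitaryGroup_mul_posSemidef B
  have hU' : Uᴴ ∈ unitaryGroup n ℂ := Unitary.star_mem hU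
  rw [conjTranspose_mul, hP.isHermitian.eq, ← hN Uᴴ Uᴴ (U * P) hU' hU', ← Matrix.mul_assoc,
    ← star_eq_conjTranspose, Unitary.star_mul_self_of_mem hU, Matrix.one_mul]

variable (htri : ∀ B C, N (B + C) ≤ N B + N C) (hsmul : ∀ (c : ℂ) B, N (c • B) = ‖c‖ * N B)
include htri hsmul

theorem exists_isHermitian_re_trace_mul_eq_and_le (hN : IsUnitarilyInvariant N)
    {P : Matrix n n ℂ} (hP : P.IsHermitian) :
    ∃ H : Matrix n n ℂ, H.IsHermitian ∧ (H * P).trace.re = N P ∧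
      ∀ X, (H * X).trace.re ≤ N X := by
  obtain ⟨g, hgP, hgN⟩ := exists_linearMap_eq_and_le_sublinear (N := N)
    (fun c hc X => by
      rw [RCLike.real_smul_eq_coe_smul (K := ℂ), hsmul, RCLike.norm_ofReal, abs_of_pos hc])
    htri P
  obtain ⟨Z, hZ⟩ := exists_re_trace_mul_eq g
  have hZ' (X : Matrix n n ℂ) : (Zᴴ * X).trace.re = g Xᴴ := by
    rw [hZ, ← conjTranspose_conjTranspose X, ← conjTranspose_mul, trace_conjTranspose,
      conjTranspose_conjTranspose, trace_mul_comm]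
    exact Complex.conj_re _
  have hH (X : Matrix n n ℂ) :
      (((2⁻¹ : ℝ) : ℂ) • (Zᴴ + Z) * X).trace.re = 2⁻¹ * (g Xᴴ + g X) := by
    rw [smul_mul_assoc, trace_smul, Matrix.add_mul, trace_add, smul_eq_mul, Complex.re_ofReal_mul,
      Complex.add_re, ← hZ, hZ']
  refine ⟨((2⁻¹ : ℝ) : ℂ) • (Zᴴ + Z), (isHermitian_transpose_add_self Z).smul
    (Complex.conj_ofReal _), ?_, fun X => ?_⟩
  · rw [hH, hP.eq, hgP]
    ring
  · rw [hH]
    linarith [hgN X, hgN Xᴴ, hN.apply_conjTranspose X]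

theorem apply_le_of_posSemidef_sub (hN : IsUnitarilyInvariant N) {P R : Matrix n n ℂ}
    (hP : P.PosSemidef) (hPR : (R - P).PosSemidef) : N P ≤ N R := by
  obtain ⟨H, hH, hHP, hHN⟩ :=
    hN.exists_isHermitian_re_trace_mul_eq_and_le htri hsmul hP.isHermitian
  obtain ⟨H₁, H₂, W, hH₁, hH₂, hW, rfl, hHW⟩ := hH.exists_sub_eq_and_mul_unitary_eq_add
  have hH₂P := (Complex.nonneg_iff.mp (hH₂.trace_mul_nonneg hP)).1
  have hH₁RP := (Complex.nonneg_iff.mp (hH₁.trace_mul_nonneg hPR)).1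
  have hH₁R : 2 * (H₁ * R).trace.re =
      ((H₁ - H₂) * R).trace.re + ((H₁ - H₂) * (W * R)).trace.re := by
    rw [← Matrix.mul_assoc, hHW]
    simp only [Matrix.sub_mul, Matrix.add_mul, trace_sub, trace_add, Complex.sub_re, Complex.add_re]
    ring
  simp only [Matrix.sub_mul, Matrix.mul_sub, trace_sub, Complex.sub_re] at hHP hH₁RP
  linarith [hHN R, hHN (W * R), hN.apply_mul_left hW R]

theorem two_mul_mul_apply_le_of_fromBlocks (hN : IsUnitarilyInvariant N) {A B C : Matrix n n ℂ}
    (hM : (fromBlocks A B Bᴴ C).PosSemidef) {s : ℝ} (hs : 0 ≤ s) :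
    2 * s * N B ≤ s ^ 2 * N A + N C := by
  obtain ⟨U, hU, P, hP, rfl⟩ := exists_mem_unitaryGroup_mul_posSemidef B
  have hUU : Uᴴ * U = 1 := Unitary.star_mul_self_of_mem hU
  have hsum := hM.fromBlocks_conj_fromRows ((s : ℂ) • U) (-1)
  have : ((s : ℂ) • U)ᴴ * A * ((s : ℂ) • U) + ((s : ℂ) • U)ᴴ * (U * P) * -1 +
      (-1)ᴴ * (U * P)ᴴ * ((s : ℂ) • U) + (-1)ᴴ * C * -1 =
      (((s ^ 2 : ℝ) : ℂ) • (Uᴴ * A * U) + C) - ((2 * s : ℝ) : ℂ) • P := by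
    simp only [conjTranspose_smul, conjTranspose_neg, conjTranspose_one, conjTranspose_mul,
      hP.isHermitian.eq, Complex.star_def, Complex.conj_ofReal, Matrix.smul_mul, Matrix.mul_smul,
      Matrix.mul_neg, Matrix.neg_mul, Matrix.mul_one, Matrix.one_mul, neg_neg, smul_smul]
    rw [← Matrix.mul_assoc Uᴴ U P, hUU, Matrix.one_mul, Matrix.mul_assoc P, hUU, Matrix.mul_one]
    push_cast
    module
  rw [this] at hsum
  calc 2 * s * N (U * P) = N (((2 * s : ℝ) : ℂ) • P) := by
        rw [hN.apply_mul_left hU, hsmul, Complex.norm_real, Real.norm_of_nonneg (by positivity)]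
    _ ≤ N (((s ^ 2 : ℝ) : ℂ) • (Uᴴ * A * U) + C) := hN.apply_le_of_posSemidef_sub htri hsmul
        (hP.smul (Complex.zero_le_real.mpr (by positivity))) hsum
    _ ≤ N (((s ^ 2 : ℝ) : ℂ) • (Uᴴ * A * U)) + N C := htri _ _
    _ = s ^ 2 * N A + N C := by
        rw [hsmul, Complex.norm_real, Real.norm_of_nonneg (by positivity),
          hN Uᴴ U A (Unitary.star_mem hU) hU]

theorem sq_apply_le_mul_of_fromBlocks (hN : IsUnitarilyInvariant N) (hpos : ∀ B, 0 ≤ N B)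
    {A B C : Matrix n n ℂ} (hM : (fromBlocks A B Bᴴ C).PosSemidef) :
    N B ^ 2 ≤ N A * N C := by
  have := discrim_le_zero (a := N A) (b := -2 * N B) (c := N C) fun s => by
    rcases le_total 0 s with hs | hs
    · nlinarith [hN.two_mul_mul_apply_le_of_fromBlocks htri hsmul hM hs]
    · nlinarith [hpos A, hpos B, hpos C, mul_self_nonneg s]
  rw [discrim] at this
  linarith

end IsUnitarilyInvariant

theorem posSemidef_fin_two_of_sq_le_mul {a b c : ℝ} (ha : 0 ≤ a) (hc : 0 ≤ c)
    (h : b ^ 2 ≤ a * c) : (!![a, b; b, c]).PosSemidef := by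
  refine .of_dotProduct_mulVec_nonneg ?_ fun x => ?_
  · ext i j
    fin_cases i <;> fin_cases j <;> rfl
  · simp only [star_trivial, dotProduct, mulVec, Fin.sum_univ_two, of_apply, cons_val',
      cons_val_zero, cons_val_one, empty_val', cons_val_fin_one]
    rcases (add_nonneg ha hc).eq_or_lt with hac | hac
    · obtain rfl : a = 0 := by linarith
      obtain rfl : c = 0 := by linarith
      obtain rfl : b = 0 := by nlinarith
      simp
    · refine nonneg_of_mul_nonneg_right ?_ hac
      nlinarith [sq_nonneg (a * x 0 + b * x 1), sq_nonneg (b * x 0 + c * x 1),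
        sq_nonneg (x 0), sq_nonneg (x 1)]

end Matrix

theorem Matrix.IsHermitian.blk_one_zero {n : ℕ} {A : Matrix (Fin 2 × Fin n) (Fin 2 × Fin n) ℂ}
    (hA : A.IsHermitian) : blk A 1 0 = (blk A 0 1)ᴴ := by
  ext r s
  exact (hA.apply (1, r) (0, s)).symm

theorem Matrix.PosSemidef.fromBlocks_blk {n : ℕ} {A : Matrix (Fin 2 × Fin n) (Fin 2 × Fin n) ℂ}
    (hA : A.PosSemidef) :
    (fromBlocks (blk A 0 0) (blk A 0 1) (blk A 0 1)ᴴ (blk A 1 1)).PosSemidef := by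
  rw [← hA.isHermitian.blk_one_zero]
  convert hA.submatrix (Sum.elim ((0 : Fin 2), ·) ((1 : Fin 2), ·)) using 1
  ext (r | r) (s | s) <;> rfl

theorem norm_blocks_posSemidef_two_general {n : ℕ}
    (N : Matrix (Fin n) (Fin n) ℂ → ℝ)
    (hpos : ∀ B, 0 ≤ N B)
    (htri : ∀ B C, N (B + C) ≤ N B + N C)
    (hsmul : ∀ (c : ℂ) B, N (c • B) = ‖c‖ * N B)
    (hinv : ∀ U V B, U ∈ Matrix.unitaryGroup (Fin n) ℂ →
      V ∈ Matrix.unitaryGroup (Fin n) ℂ → N (U * B * V) = N B)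
    (A : Matrix (Fin 2 × Fin n) (Fin 2 × Fin n) ℂ) (hA : A.PosSemidef) :
    (Matrix.of ![![N (blk A 0 0), N (blk A 0 1)],
        ![N (blk A 1 0), N (blk A 1 1)]]).PosSemidef ∧
    N (blk A 0 1) ^ 2 ≤ N (blk A 0 0) * N (blk A 1 1) := by
  have hN : IsUnitarilyInvariant N := hinv
  have hsq := hN.sq_apply_le_mul_of_fromBlocks htri hsmul hpos hA.fromBlocks_blk
  rw [hA.isHermitian.blk_one_zero, hN.apply_conjTranspose]
  exact ⟨posSemidef_fin_two_of_sq_le_mul (hpos _) (hpos _) hsq, hsq⟩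

/-- Horn–Mathias: for a `2 × 2` partitioned positive semi-definite matrix and any
unitarily invariant norm, the `2 × 2` matrix of block norms is positive
semi-definite; equivalently `‖A₁₂‖² ≤ ‖A₁₁‖ ‖A₂₂‖`. -/
theorem norm_blocks_posSemidef_two {n : ℕ}
    (N : Matrix (Fin n) (Fin n) ℂ → ℝ)
    (hpos : ∀ B, 0 ≤ N B) (hzero : ∀ B, N B = 0 → B = 0)
    (htri : ∀ B C, N (B + C) ≤ N B + N C)
    (hsmul : ∀ (c : ℂ) B, N (c • B) = ‖c‖ * N B)
    (hinv : ∀ U V B, U ∈ Matrix.unitaryGroup (Fin n) ℂ →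
      V ∈ Matrix.unitaryGroup (Fin n) ℂ → N (U * B * V) = N B)
    (A : Matrix (Fin 2 × Fin n) (Fin 2 × Fin n) ℂ) (hA : A.PosSemidef) :
    (Matrix.of ![![N (blk A 0 0), N (blk A 0 1)],
        ![N (blk A 1 0), N (blk A 1 1)]]).PosSemidef ∧
    N (blk A 0 1) ^ 2 ≤ N (blk A 0 0) * N (blk A 1 1) :=
  norm_blocks_posSemidef_two_general N hpos htri hsmul hinv A hA
end

section
/- Let m ≥ 4 and n ≥ 1, and let ||·|| be any unitarily invariant norm on M_n(C). Then there exists a positive semi-definite matrix A = (A_ij)_{1≤i,j≤m} partitioned into n×n blocks such that the m×m matrix (||A_ij||) is not positive semi-definite. -/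
/-!
A positive semi-definite matrix `B` whose entrywise absolute value `|B|` is not positive
semi-definite exists already in size `4` (Thompson): `B = WᴴW` with rows `(1, 1, 0, -1)`
and `(0, 1, 1, 1)` of `W`, where the sign pattern `(1, -1, 1, -1)` gives `|B|` the negative
quadratic form value `-2`. Padding with zeros gives such a `B` in every size `m ≥ 4`. The
blocks of `A = B ⊗ 1` are `bᵢⱼ • 1`, so by homogeneity the matrix of block norms is the
positive multiple `N 1 • |B|` of `|B|`, which is not positive semi-definite.
-/

open Matrix ComplexOrder
open scoped Kronecker

namespace Matrix

theorem PosSemidef.of_smul {R ι : Type*} [Field R] [LinearOrder R] [IsOrderedRing R]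
    [StarRing R] [StarOrderedRing R] {M : Matrix ι ι R} {c : R} (hc : 0 < c)
    (h : (c • M).PosSemidef) : M.PosSemidef := by
  simpa [smul_smul, inv_mul_cancel₀ hc.ne'] using h.smul (inv_nonneg.2 hc.le)

theorem PosSemidef.exists_submatrix_eq {R ι κ : Type*} [CommRing R] [PartialOrder R]
    [StarRing R] [Fintype ι] [Fintype κ] [DecidableEq κ] {B : Matrix ι ι R}
    (hB : B.PosSemidef) {e : ι → κ} (he : Function.Injective e) :
    ∃ B' : Matrix κ κ R, B'.PosSemidef ∧ B'.submatrix e e = B := by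
  classical
  let P : Matrix ι κ R := of fun i k => if e i = k then 1 else 0
  have hP : P.submatrix id e = 1 := by ext i j; simp [P, one_apply, he.eq_iff]
  refine ⟨Pᴴ * B * P, hB.conjTranspose_mul_mul_same P, ?_⟩
  rw [submatrix_mul _ _ _ id _ Function.bijective_id,
    submatrix_mul _ _ _ id _ Function.bijective_id, ← conjTranspose_submatrix, hP]
  simp

theorem comp_symm_kronecker {I J K L R : Type*} [Mul R] (A : Matrix I J R) (E : Matrix K L R) :
    (comp I J K L R).symm (A ⊗ₖ E) = A.map (· • E) := by
  ext i j k l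
  simp [kroneckerMap_apply]

theorem map_comp_symm_kronecker {I J K L 𝕜 : Type*} [Mul 𝕜] [Norm 𝕜] {N : Matrix K L 𝕜 → ℝ}
    (hsmul : ∀ (c : 𝕜) B, N (c • B) = ‖c‖ * N B) (A : Matrix I J 𝕜) (E : Matrix K L 𝕜) :
    ((comp I J K L 𝕜).symm (A ⊗ₖ E)).map N = N E • A.map (‖·‖) := by
  ext i j
  simp [comp_symm_kronecker, hsmul, mul_comm]

end Matrix

def thompsonFactor : Matrix (Fin 2) (Fin 4) ℂ := !![1, 1, 0, -1; 0, 1, 1, 1]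

def thompson : Matrix (Fin 4) (Fin 4) ℂ := thompsonFactorᴴ * thompsonFactor

theorem posSemidef_thompson : thompson.PosSemidef := posSemidef_conjTranspose_mul_self _

theorem map_norm_thompson :
    thompson.map (‖·‖) = !![1, 1, 0, 1; 1, 2, 1, 0; 0, 1, 1, 1; 1, 0, 1, 2] := by
  ext i j
  fin_cases i <;> fin_cases j <;> norm_num [thompson, thompsonFactor, mul_apply, Fin.sum_univ_two]

theorem not_posSemidef_map_norm_thompson : ¬ (thompson.map (‖·‖)).PosSemidef := by
  intro h
  have := h.dotProduct_mulVec_nonneg ![1, -1, 1, -1]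
  rw [map_norm_thompson] at this
  norm_num [dotProduct, mulVec, Fin.sum_univ_succ] at this

theorem exists_norm_blocks_not_posSemidef_of_four_le_general {m n : ℕ}
    (hm : 4 ≤ m) (hn : 1 ≤ n)
    (N : Matrix (Fin n) (Fin n) ℂ → ℝ)
    (hpos : ∀ B, 0 ≤ N B) (hzero : ∀ B, N B = 0 → B = 0)
    (hsmul : ∀ (c : ℂ) B, N (c • B) = ‖c‖ * N B) :
    ∃ A : Matrix (Fin m × Fin n) (Fin m × Fin n) ℂ, A.PosSemidef ∧
      ¬ (Matrix.of fun i j : Fin m =>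
          N (Matrix.of fun r s : Fin n => A (i, r) (j, s))).PosSemidef := by
  obtain ⟨B, hB, hB_thompson⟩ :=
    posSemidef_thompson.exists_submatrix_eq (Fin.castLE_injective hm)
  have : Nonempty (Fin n) := ⟨⟨0, hn⟩⟩
  have hN_one : 0 < N 1 := (hpos 1).lt_of_ne' fun h => one_ne_zero (hzero 1 h)
  refine ⟨B ⊗ₖ 1, hB.kronecker .one, fun h => not_posSemidef_map_norm_thompson ?_⟩
  change (((comp _ _ _ _ ℂ).symm (B ⊗ₖ 1)).map N).PosSemidef at h
  rw [map_comp_symm_kronecker hsmul] at h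
  rw [← hB_thompson, ← submatrix_map]
  exact (h.of_smul hN_one).submatrix _

/-- For `m ≥ 4`, `n ≥ 1` and any unitarily invariant norm on `M_n(ℂ)`, there is a
positive semi-definite matrix partitioned into `m²` blocks of size `n × n` whose
`m × m` matrix of block norms is not positive semi-definite. -/
theorem exists_norm_blocks_not_posSemidef_of_four_le {m n : ℕ}
    (hm : 4 ≤ m) (hn : 1 ≤ n)
    (N : Matrix (Fin n) (Fin n) ℂ → ℝ)
    (hpos : ∀ B, 0 ≤ N B) (hzero : ∀ B, N B = 0 → B = 0)
    (htri : ∀ B C, N (B + C) ≤ N B + N C)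
    (hsmul : ∀ (c : ℂ) B, N (c • B) = ‖c‖ * N B)
    (hinv : ∀ U V B, U ∈ Matrix.unitaryGroup (Fin n) ℂ →
      V ∈ Matrix.unitaryGroup (Fin n) ℂ → N (U * B * V) = N B) :
    ∃ A : Matrix (Fin m × Fin n) (Fin m × Fin n) ℂ, A.PosSemidef ∧
      ¬ (Matrix.of fun i j : Fin m =>
          N (Matrix.of fun r s : Fin n => A (i, r) (j, s))).PosSemidef :=
  exists_norm_blocks_not_posSemidef_of_four_le_general hm hn N hpos hzero hsmul
end
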